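/- (Lemma 4(i)) Let f,g,h,l be a permutation of 1,2,3,4 and let ρ be a pure density matrix on (ℂ^d)^{⊗4} that is separable under the bipartition fg|hl, i.e. ρ = ρ_{fg} ⊗ ρ_{hl} (up to the corresponding permutation of tensor factors) with ρ_{fg} and ρ_{hl} density matrices on (ℂ^d)^{⊗2}. Then for every k = 1,…,d²−1, ‖T_{fg|hl}‖_k ≤ 4(d²−1)/d². -/

import Mathlib

open Matrix ComplexOrder

/-- The singular values of a real matrix `M`: square roots of eigenvalues of `Mᴴ * M`. -/
noncomputable def singVals {α β : Type*} [Fintype α] [Fintype β] [DecidableEq β]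
    (M : Matrix α β ℝ) : β → ℝ :=
  fun i => Real.sqrt ((Matrix.isHermitian_conjTranspose_mul_self M).eigenvalues i)

/-- The Ky Fan `k`-norm of a real matrix: the sum of its `k` largest singular values
(realized as the largest sum of singular values over index sets of size at most `k`). -/
noncomputable def kyFan {α β : Type*} [Fintype α] [Fintype β] [DecidableEq β]
    (k : ℕ) (M : Matrix α β ℝ) : ℝ :=
  (Finset.univ.powerset.filter (fun s : Finset β => s.card ≤ k)).sup'
    ⟨∅, by simp⟩ (fun s => ∑ i ∈ s, singVals M i)

/-- Separability of an `n`-partite state (indexed by `Fin n → Fin d`) under the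
bipartition `A | Aᶜ`: `ρ` is, up to the permutation of tensor factors, the tensor
product of a density matrix on the factors in `A` and one on the factors not in `A`. -/
def SepUnder {n d : ℕ} (ρ : Matrix (Fin n → Fin d) (Fin n → Fin d) ℂ)
    (A : Finset (Fin n)) : Prop :=
  ∃ (ρA : Matrix ({j // j ∈ A} → Fin d) ({j // j ∈ A} → Fin d) ℂ)
    (ρB : Matrix ({j // j ∉ A} → Fin d) ({j // j ∉ A} → Fin d) ℂ),
    ρA.PosSemidef ∧ ρA.trace = 1 ∧ ρB.PosSemidef ∧ ρB.trace = 1 ∧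
    ∀ v w, ρ v w = ρA (fun j => v j.1) (fun j => w j.1) * ρB (fun j => v j.1) (fun j => w j.1)

/-- The full `n`-body correlation tensor entry `t_{a 0, …, a (n-1)}` of `ρ`,
i.e. `tr (ρ · (λ_{a 0} ⊗ ⋯ ⊗ λ_{a (n-1)}))`. -/
noncomputable def corrFull {n d : ℕ} (lam : Fin (d ^ 2 - 1) → Matrix (Fin d) (Fin d) ℂ)
    (ρ : Matrix (Fin n → Fin d) (Fin n → Fin d) ℂ) (a : Fin n → Fin (d ^ 2 - 1)) : ℝ :=
  (Matrix.trace (ρ * Matrix.of (fun v w : Fin n → Fin d => ∏ j, lam (a j) (v j) (w j)))).re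

/-- The matricization `T_{fg|hl}` of the 4-body correlation tensor: rows indexed by
`(i_f, i_g)`, columns by `(i_h, i_l)`. -/
noncomputable def T2v2 {d : ℕ} (lam : Fin (d ^ 2 - 1) → Matrix (Fin d) (Fin d) ℂ)
    (ρ : Matrix (Fin 4 → Fin d) (Fin 4 → Fin d) ℂ) (f g h l : Fin 4) :
    Matrix (Fin (d ^ 2 - 1) × Fin (d ^ 2 - 1)) (Fin (d ^ 2 - 1) × Fin (d ^ 2 - 1)) ℝ :=
  Matrix.of fun r c => corrFull lam ρ
    (fun j => if j = f then r.1 else if j = g then r.2 else if j = h then c.1 else c.2)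

open scoped Kronecker

/-!
Separability makes every entry of `T_{fg|hl}` factor as `x_{i_f i_g} · y_{i_h i_l}`, where `x` and
`y` are the two-body correlation vectors of the two factors; so `T = x yᵀ` has rank one and all its
Ky Fan norms are bounded by `‖x‖ ‖y‖`. Each factor is a two-qudit state `σ`, and the matrices
`(λ_a ⊗ λ_b) / 2` are orthonormal for the Hilbert–Schmidt inner product and orthogonal to the
identity. Bessel's inequality for the traceless part `σ - 1/d²` then gives
`‖x‖² ≤ 4 (tr σ² - 1/d²) ≤ 4 (1 - 1/d²)`, and likewise for `y`.
-/

section KyFan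

variable {α β : Type*} [Fintype α] [Fintype β] [DecidableEq β]

lemma kyFan_le_sum_singVals (k : ℕ) (M : Matrix α β ℝ) : kyFan k M ≤ ∑ i, singVals M i :=
  Finset.sup'_le _ _ fun _ _ => Finset.sum_le_univ_sum_of_nonneg fun _ => Real.sqrt_nonneg _

lemma Matrix.IsHermitian.eigenvalues_eq_zero_or_eq_of_mul_self_eq_smul {𝕜 n : Type*} [RCLike 𝕜]
    [Fintype n] [DecidableEq n] {N : Matrix n n 𝕜} (hN : N.IsHermitian) {s : ℝ}
    (h : N * N = (s : 𝕜) • N) (i : n) : hN.eigenvalues i = 0 ∨ hN.eigenvalues i = s := by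
  set v : n → 𝕜 := ⇑(hN.eigenvectorBasis i)
  have hv : v ≠ 0 := (WithLp.ofLp_eq_zero 2).ne.2 (hN.eigenvectorBasis.orthonormal.ne_zero i)
  have hNv := hN.mulVec_eigenvectorBasis i
  have key : (hN.eigenvalues i * hN.eigenvalues i) • v = (s * hN.eigenvalues i) • v :=
    calc (hN.eigenvalues i * hN.eigenvalues i) • v = (N * N) *ᵥ v := by
          rw [← mulVec_mulVec, hNv, mulVec_smul, hNv, smul_smul]
      _ = (s * hN.eigenvalues i) • v := by
          rw [h, smul_mulVec, hNv, ← RCLike.real_smul_eq_coe_smul (K := 𝕜) s, smul_smul]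
  exact (mul_eq_mul_right_iff.mp (smul_left_injective ℝ hv key)).symm

lemma sum_singVals_vecMulVec (x : α → ℝ) (y : β → ℝ) :
    ∑ i, singVals (vecMulVec x y) i = √((x ⬝ᵥ x) * (y ⬝ᵥ y)) := by
  set s := (x ⬝ᵥ x) * (y ⬝ᵥ y)
  set N := (vecMulVec x y)ᴴ * vecMulVec x y
  have hN : N = vecMulVec y ((x ⬝ᵥ x) • y) := by
    simp [N, vecMulVec_mul_vecMulVec]
  have hNN : N * N = s • N := by
    rw [hN, vecMulVec_mul_vecMulVec, ← vecMulVec_smul, smul_dotProduct, smul_smul, smul_smul,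
      smul_eq_mul, mul_comm]
  have hH := isHermitian_conjTranspose_mul_self (vecMulVec x y)
  -- every eigenvalue `μ` of `N` lies in `{0, s}`, and for both values `√μ = μ / √s`
  have hsqrt : ∀ i, singVals (vecMulVec x y) i = hH.eigenvalues i / √s := fun i => by
    change √(hH.eigenvalues i) = _
    rcases hH.eigenvalues_eq_zero_or_eq_of_mul_self_eq_smul hNN i with h | h <;> rw [h]
    · simp
    · exact Real.div_sqrt.symm
  have htr : ∑ i, hH.eigenvalues i = s := by
    have := hH.trace_eq_sum_eigenvalues
    simp only [RCLike.ofReal_real_eq_id, id] at this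
    rw [← this]
    change N.trace = s
    rw [hN, trace_vecMulVec, dotProduct_comm, smul_dotProduct, smul_eq_mul]
  rw [Finset.sum_congr rfl fun i _ => hsqrt i, ← Finset.sum_div, htr, Real.div_sqrt]

lemma kyFan_vecMulVec_le (k : ℕ) {x : α → ℝ} {y : β → ℝ} {b : ℝ} (hx : ∑ i, x i ^ 2 ≤ b)
    (hy : ∑ j, y j ^ 2 ≤ b) : kyFan k (vecMulVec x y) ≤ b := by
  have hx' : x ⬝ᵥ x ≤ b := by simpa only [dotProduct, ← sq] using hx
  have hy' : y ⬝ᵥ y ≤ b := by simpa only [dotProduct, ← sq] using hy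
  have hy0 : 0 ≤ y ⬝ᵥ y := Finset.sum_nonneg fun _ _ => mul_self_nonneg _
  have hb : 0 ≤ b := hy0.trans hy'
  calc kyFan k (vecMulVec x y) ≤ ∑ i, singVals (vecMulVec x y) i := kyFan_le_sum_singVals k _
    _ = √((x ⬝ᵥ x) * (y ⬝ᵥ y)) := sum_singVals_vecMulVec x y
    _ ≤ √(b * b) := Real.sqrt_le_sqrt (mul_le_mul hx' hy' hy0 hb)
    _ = b := Real.sqrt_mul_self hb

end KyFan

section HilbertSchmidt

lemma Matrix.IsHermitian.trace_mul_self {𝕜 n : Type*} [RCLike 𝕜] [Fintype n] [DecidableEq n]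
    {A : Matrix n n 𝕜} (hA : A.IsHermitian) :
    (A * A).trace = ∑ i, ((hA.eigenvalues i ^ 2 : ℝ) : 𝕜) := by
  conv_lhs => rw [hA.spectral_theorem, ← map_mul, Unitary.conjStarAlgAut_apply, trace_mul_cycle,
    Unitary.coe_star_mul_self, one_mul, diagonal_mul_diagonal, trace_diagonal]
  simp [sq]

lemma Matrix.PosSemidef.re_trace_mul_self_le {𝕜 n : Type*} [RCLike 𝕜] [Fintype n]
    {A : Matrix n n 𝕜} (hA : A.PosSemidef) :
    RCLike.re (A * A).trace ≤ RCLike.re A.trace ^ 2 := by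
  classical
  rw [hA.1.trace_mul_self, hA.1.trace_eq_sum_eigenvalues]
  simp only [map_sum, RCLike.ofReal_re]
  exact Finset.sum_sq_le_sq_sum_of_nonneg fun i _ => hA.eigenvalues_nonneg i

lemma Matrix.IsHermitian.im_trace_mul_eq_zero {n : Type*} [Fintype n] {A B : Matrix n n ℂ}
    (hA : A.IsHermitian) (hB : B.IsHermitian) : (A * B).trace.im = 0 := by
  refine Complex.conj_eq_iff_im.mp ?_
  change star (A * B).trace = _
  rw [← trace_conjTranspose, conjTranspose_mul, hA.eq, hB.eq, trace_mul_comm]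

variable {ι κ : Type*} [Fintype ι] [Fintype κ] [DecidableEq κ]

lemma inner_toLp_vec (A B : Matrix ι ι ℂ) :
    inner ℂ (WithLp.toLp 2 A.vec) (WithLp.toLp 2 B.vec) = (Aᴴ * B).trace := by
  rw [EuclideanSpace.inner_toLp_toLp, dotProduct_comm, star_vec_dotProduct_vec]

lemma sum_norm_trace_mul_sq_le (A : Matrix ι ι ℂ) (G : κ → Matrix ι ι ℂ)
    (hG : ∀ p, (G p).IsHermitian) {c : ℝ} (hc : 0 < c)
    (hGG : ∀ p q, (G p * G q).trace = if p = q then (c : ℂ) else 0) :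
    ∑ p, ‖(A * G p).trace‖ ^ 2 ≤ c * ((Aᴴ * A).trace).re := by
  set v : κ → EuclideanSpace ℂ (ι × ι) := fun p => WithLp.toLp 2 ((√c)⁻¹ • G p).vec
  have hv : Orthonormal ℂ v := by
    rw [orthonormal_iff_ite]
    intro p q
    rw [inner_toLp_vec, conjTranspose_smul, (hG p).eq, smul_mul_smul, trace_smul, hGG]
    split_ifs
    · rw [star_trivial, ← mul_inv, Real.mul_self_sqrt hc.le, Complex.real_smul,
        Complex.ofReal_inv, inv_mul_cancel₀ (Complex.ofReal_ne_zero.mpr hc.ne')]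
    · simp
  have hinner : ∀ p, ‖inner ℂ (v p) (WithLp.toLp 2 A.vec)‖ ^ 2 = ‖(A * G p).trace‖ ^ 2 / c := by
    intro p
    rw [inner_toLp_vec, conjTranspose_smul, (hG p).eq, smul_mul, trace_smul, trace_mul_comm,
      norm_smul, mul_pow, star_trivial, norm_inv, Real.norm_of_nonneg (Real.sqrt_nonneg c),
      inv_pow, Real.sq_sqrt hc.le, inv_mul_eq_div]
  have hnorm : ‖(WithLp.toLp 2 A.vec : EuclideanSpace ℂ (ι × ι))‖ ^ 2 = ((Aᴴ * A).trace).re := by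
    rw [← inner_self_eq_norm_sq (𝕜 := ℂ), inner_toLp_vec]
    rfl
  have hbessel := hv.sum_inner_products_le (WithLp.toLp 2 A.vec) (s := Finset.univ)
  simp only [hinner, hnorm, ← Finset.sum_div] at hbessel
  rwa [div_le_iff₀' hc] at hbessel

/-- Bessel's inequality applied to the traceless part `σ - 1/n` of `σ`, whose squared
Hilbert–Schmidt norm is `tr σ² - 1/n ≤ 1 - 1/n`. -/
lemma sum_sq_re_trace_mul_le [DecidableEq ι] {σ : Matrix ι ι ℂ} (hσ : σ.PosSemidef)
    (hσ1 : σ.trace = 1) (G : κ → Matrix ι ι ℂ) (hG : ∀ p, (G p).IsHermitian)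
    (hG0 : ∀ p, (G p).trace = 0) {c : ℝ} (hc : 0 < c)
    (hGG : ∀ p q, (G p * G q).trace = if p = q then (c : ℂ) else 0) :
    ∑ p, ((σ * G p).trace.re) ^ 2 ≤ c * (1 - 1 / Fintype.card ι) := by
  set n : ℂ := (Fintype.card ι : ℂ)
  set σ₀ := σ - n⁻¹ • (1 : Matrix ι ι ℂ)
  have hσ₀G : ∀ p, (σ₀ * G p).trace = (σ * G p).trace := fun p => by
    simp [σ₀, sub_mul, hG0]
  have hσ₀ : (σ₀ᴴ * σ₀).trace = (σ * σ).trace - n⁻¹ := by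
    -- true also for `n = 0`, so `ι` need not be shown nonempty
    have hn : n⁻¹ * n⁻¹ * n = n⁻¹ := by simpa using mul_self_mul_inv n⁻¹
    simp only [σ₀, n, conjTranspose_sub, hσ.1.eq, conjTranspose_smul, star_inv₀, star_natCast,
      conjTranspose_one, mul_sub, sub_mul, Algebra.smul_mul_assoc, one_mul, Algebra.mul_smul_comm,
      mul_one, trace_sub, trace_smul, hσ1, smul_eq_mul, trace_one, sub_eq_self] at hn ⊢
    rw [← mul_assoc, hn, sub_self]
  calc ∑ p, ((σ * G p).trace.re) ^ 2 ≤ ∑ p, ‖(σ₀ * G p).trace‖ ^ 2 :=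
        Finset.sum_le_sum fun p _ => by
          rw [hσ₀G, Complex.sq_norm, sq]
          exact Complex.re_sq_le_normSq _
    _ ≤ c * ((σ₀ᴴ * σ₀).trace).re := sum_norm_trace_mul_sq_le σ₀ G hG hc hGG
    _ ≤ c * (1 - 1 / Fintype.card ι) := by
        gcongr
        rw [hσ₀]
        simpa [hσ1, n] using hσ.re_trace_mul_self_le

end HilbertSchmidt

def kroneckerPi {S ι R : Type*} [Fintype S] [CommMonoid R] (F : S → Matrix ι ι R) :
    Matrix (S → ι) (S → ι) R :=
  of fun v w => ∏ j, F j (v j) (w j)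

section kroneckerPi

variable {S ι R : Type*} [Fintype S]

lemma kroneckerPi_mul_kroneckerPi [DecidableEq S] [Fintype ι] [CommSemiring R]
    (F G : S → Matrix ι ι R) :
    kroneckerPi F * kroneckerPi G = kroneckerPi fun j => F j * G j := by
  ext v w
  simp only [kroneckerPi, mul_apply, of_apply, Fintype.prod_sum, Finset.prod_mul_distrib]

lemma trace_kroneckerPi [DecidableEq S] [Fintype ι] [CommSemiring R] (F : S → Matrix ι ι R) :
    (kroneckerPi F).trace = ∏ j, (F j).trace := by
  simp only [kroneckerPi, trace, diag_apply, of_apply, Fintype.prod_sum]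

lemma conjTranspose_kroneckerPi [CommSemiring R] [StarRing R] (F : S → Matrix ι ι R) :
    (kroneckerPi F)ᴴ = kroneckerPi fun j => (F j)ᴴ := by
  ext v w
  simp [kroneckerPi, star_prod]

lemma isHermitian_kroneckerPi [CommSemiring R] [StarRing R] {F : S → Matrix ι ι R}
    (hF : ∀ j, (F j).IsHermitian) : (kroneckerPi F).IsHermitian := by
  simp only [IsHermitian, conjTranspose_kroneckerPi, fun j => (hF j).eq]

lemma trace_kroneckerPi_mul_kroneckerPi {τ : Type*} [DecidableEq S] [Fintype ι] [DecidableEq τ]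
    [CommSemiring R] {lam : τ → Matrix ι ι R} {c : R}
    (h : ∀ a b, (lam a * lam b).trace = if a = b then c else 0) (a b : S → τ) :
    ((kroneckerPi fun j => lam (a j)) * kroneckerPi fun j => lam (b j)).trace =
      if a = b then c ^ Fintype.card S else 0 := by
  rw [kroneckerPi_mul_kroneckerPi, trace_kroneckerPi]
  simp only [h]
  split_ifs with hab
  · simp [hab]
  · obtain ⟨j, hj⟩ := Function.ne_iff.mp hab
    exact Finset.prod_eq_zero (Finset.mem_univ j) (if_neg hj)

lemma trace_submatrix_equiv {m n : Type*} [Fintype m] [Fintype n] [AddCommMonoid R]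
    (M : Matrix n n R) (e : m ≃ n) : (M.submatrix e e).trace = M.trace :=
  e.sum_comp fun i => M i i

lemma kroneckerPi_eq_submatrix_kronecker [DecidableEq S] [CommMonoid R] (A : Finset S)
    (F : S → Matrix ι ι R) :
    kroneckerPi F = ((kroneckerPi fun j : {j // j ∈ A} => F j) ⊗ₖ
      kroneckerPi fun j : {j // j ∉ A} => F j).submatrix
        (Equiv.piEquivPiSubtypeProd (· ∈ A) fun _ => ι)
        (Equiv.piEquivPiSubtypeProd (· ∈ A) fun _ => ι) := by
  ext v w
  simp only [kroneckerPi, submatrix_apply, kroneckerMap_apply, of_apply,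
    Equiv.piEquivPiSubtypeProd_apply]
  convert (Fintype.prod_subtype_mul_prod_subtype (· ∈ A) fun j => F j (v j) (w j)).symm

lemma trace_mul_kroneckerPi_of_eq_mul [DecidableEq S] [Fintype ι] [CommSemiring R]
    {A : Finset S} {ρ : Matrix (S → ι) (S → ι) R}
    {ρA : Matrix ({j // j ∈ A} → ι) ({j // j ∈ A} → ι) R}
    {ρB : Matrix ({j // j ∉ A} → ι) ({j // j ∉ A} → ι) R}
    (hρ : ∀ v w, ρ v w =
      ρA (fun j => v j.1) (fun j => w j.1) * ρB (fun j => v j.1) (fun j => w j.1))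
    (F : S → Matrix ι ι R) :
    (ρ * kroneckerPi F).trace = (ρA * kroneckerPi fun j : {j // j ∈ A} => F j).trace *
      (ρB * kroneckerPi fun j : {j // j ∉ A} => F j).trace := by
  have hρ' : ρ = (ρA ⊗ₖ ρB).submatrix (Equiv.piEquivPiSubtypeProd (· ∈ A) fun _ => ι)
      (Equiv.piEquivPiSubtypeProd (· ∈ A) fun _ => ι) := ext hρ
  rw [hρ', kroneckerPi_eq_submatrix_kronecker A, submatrix_mul_equiv, trace_submatrix_equiv,
    ← mul_kronecker_mul, trace_kronecker]

end kroneckerPi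

lemma sum_sq_re_trace_mul_kroneckerPi_le {S ι τ κ : Type*} [Fintype S] [DecidableEq S]
    [Nonempty S] [Fintype ι] [DecidableEq ι] [DecidableEq τ] [Fintype κ] [DecidableEq κ]
    {lam : τ → Matrix ι ι ℂ} (hherm : ∀ i, (lam i).IsHermitian) (htr : ∀ i, (lam i).trace = 0)
    (horth : ∀ i j, (lam i * lam j).trace = if i = j then 2 else 0)
    {σ : Matrix (S → ι) (S → ι) ℂ} (hσ : σ.PosSemidef) (hσ1 : σ.trace = 1)
    {a : κ → S → τ} (ha : Function.Injective a) :
    ∑ r, ((σ * kroneckerPi fun j => lam (a r j)).trace.re) ^ 2 ≤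
      2 ^ Fintype.card S * (1 - 1 / Fintype.card ι ^ Fintype.card S) := by
  have hG0 : ∀ r, (kroneckerPi fun j => lam (a r j)).trace = 0 := fun r => by
    rw [trace_kroneckerPi]
    exact Finset.prod_eq_zero (Finset.mem_univ (Classical.arbitrary S)) (htr _)
  have hGG : ∀ r s,
      ((kroneckerPi fun j => lam (a r j)) * kroneckerPi fun j => lam (a s j)).trace =
        if r = s then ((2 ^ Fintype.card S : ℝ) : ℂ) else 0 := fun r s => by
    simp only [trace_kroneckerPi_mul_kroneckerPi horth, ha.eq_iff]
    push_cast
    rfl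
  have := sum_sq_re_trace_mul_le hσ hσ1 _ (fun r => isHermitian_kroneckerPi fun j => hherm _)
    hG0 (by positivity) hGG
  simpa [Fintype.card_fun] using this

noncomputable def corrPair {S ι τ : Type*} [Fintype S] [DecidableEq S] [Fintype ι]
    (P : S → Prop) [DecidablePred P]
    (lam : τ → Matrix ι ι ℂ) (σ : Matrix (S → ι) (S → ι) ℂ) (r : τ × τ) : ℝ :=
  (σ * kroneckerPi fun j => lam (if P j then r.1 else r.2)).trace.re

lemma Function.injective_ite_pair {S α : Type*} {P : S → Prop} [DecidablePred P] {i₀ i₁ : S}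
    (h₀ : P i₀) (h₁ : ¬ P i₁) :
    Function.Injective fun r : α × α => fun j => if P j then r.1 else r.2 :=
  fun _ _ hrs =>
    Prod.ext (by simpa [h₀] using congrFun hrs i₀) (by simpa [h₁] using congrFun hrs i₁)

lemma sum_sq_corrPair_le {S ι τ : Type*} [Fintype S] [DecidableEq S] [Fintype ι] [DecidableEq ι]
    [Fintype τ] [DecidableEq τ] (hS : Fintype.card S = 2) {P : S → Prop} [DecidablePred P]
    {i₀ i₁ : S} (h₀ : P i₀) (h₁ : ¬ P i₁) {lam : τ → Matrix ι ι ℂ}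
    (hherm : ∀ i, (lam i).IsHermitian) (htr : ∀ i, (lam i).trace = 0)
    (horth : ∀ i j, (lam i * lam j).trace = if i = j then 2 else 0)
    {σ : Matrix (S → ι) (S → ι) ℂ} (hσ : σ.PosSemidef) (hσ1 : σ.trace = 1) :
    ∑ r, corrPair P lam σ r ^ 2 ≤ 4 * (1 - 1 / Fintype.card ι ^ 2) := by
  have : Nonempty S := ⟨i₀⟩
  have := sum_sq_re_trace_mul_kroneckerPi_le hherm htr horth hσ hσ1
    (Function.injective_ite_pair (α := τ) h₀ h₁)
  rw [hS] at this
  exact this.trans_eq (by norm_num)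

lemma corrFull_eq_re_trace_mul_kroneckerPi {n d : ℕ}
    (lam : Fin (d ^ 2 - 1) → Matrix (Fin d) (Fin d) ℂ)
    (ρ : Matrix (Fin n → Fin d) (Fin n → Fin d) ℂ) (a : Fin n → Fin (d ^ 2 - 1)) :
    corrFull lam ρ a = (ρ * kroneckerPi fun j => lam (a j)).trace.re :=
  rfl

lemma T2v2_eq_vecMulVec_of_eq_mul {d : ℕ} {lam : Fin (d ^ 2 - 1) → Matrix (Fin d) (Fin d) ℂ}
    (hherm : ∀ i, (lam i).IsHermitian) {f g : Fin 4} {ρ : Matrix (Fin 4 → Fin d) (Fin 4 → Fin d) ℂ}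
    {ρA : Matrix ({j // j ∈ ({f, g} : Finset (Fin 4))} → Fin d)
      ({j // j ∈ ({f, g} : Finset (Fin 4))} → Fin d) ℂ}
    {ρB : Matrix ({j // j ∉ ({f, g} : Finset (Fin 4))} → Fin d)
      ({j // j ∉ ({f, g} : Finset (Fin 4))} → Fin d) ℂ}
    (hA : ρA.IsHermitian)
    (hρ : ∀ v w, ρ v w =
      ρA (fun j => v j.1) (fun j => w j.1) * ρB (fun j => v j.1) (fun j => w j.1))
    (h l : Fin 4) :
    T2v2 lam ρ f g h l =
      vecMulVec (corrPair (fun j => j.1 = f) lam ρA) (corrPair (fun j => j.1 = h) lam ρB) := by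
  ext r c
  have hin : ∀ j ∈ ({f, g} : Finset (Fin 4)),
      (if j = f then r.1 else if j = g then r.2 else if j = h then c.1 else c.2) =
        if j = f then r.1 else r.2 := by
    intro j hj
    rcases Finset.mem_insert.mp hj with rfl | hj <;> simp_all
  have hout : ∀ j ∉ ({f, g} : Finset (Fin 4)),
      (if j = f then r.1 else if j = g then r.2 else if j = h then c.1 else c.2) =
        if j = h then c.1 else c.2 := by
    intro j hj
    simp only [Finset.mem_insert, Finset.mem_singleton, not_or] at hj
    simp [hj.1, hj.2]
  rw [T2v2, of_apply, corrFull_eq_re_trace_mul_kroneckerPi, trace_mul_kroneckerPi_of_eq_mul hρ,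
    Complex.mul_re, hA.im_trace_mul_eq_zero (isHermitian_kroneckerPi fun j => hherm _), zero_mul,
    sub_zero, vecMulVec_apply]
  simp only [corrPair, fun j : {j // j ∈ ({f, g} : Finset (Fin 4))} => hin j.1 j.2,
    fun j : {j // j ∉ ({f, g} : Finset (Fin 4))} => hout j.1 j.2]

lemma ne_of_insert_eq_univ_fin_four :
    ∀ f g h l : Fin 4, ({f, g, h, l} : Finset (Fin 4)) = Finset.univ →
      f ≠ g ∧ f ≠ h ∧ f ≠ l ∧ g ≠ h ∧ g ≠ l ∧ h ≠ l := by
  decide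

theorem kyFan_T2v2_of_sep_general (d : ℕ) (hd : 2 ≤ d)
    (lam : Fin (d ^ 2 - 1) → Matrix (Fin d) (Fin d) ℂ)
    (hherm : ∀ i, (lam i).IsHermitian)
    (htr : ∀ i, (lam i).trace = 0)
    (horth : ∀ i j, (lam i * lam j).trace = if i = j then 2 else 0)
    (f g h l : Fin 4) (hperm : ({f, g, h, l} : Finset (Fin 4)) = Finset.univ)
    (ρ : Matrix (Fin 4 → Fin d) (Fin 4 → Fin d) ℂ)
    (hsep : SepUnder ρ {f, g})
    (k : ℕ) :
    kyFan k (T2v2 lam ρ f g h l) ≤ 4 * ((d : ℝ) ^ 2 - 1) / (d : ℝ) ^ 2 := by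
  obtain ⟨hfg, hfh, hfl, hgh, hgl, hhl⟩ := ne_of_insert_eq_univ_fin_four f g h l hperm
  obtain ⟨ρA, ρB, hApsd, hAtr, hBpsd, hBtr, hρ⟩ := hsep
  have hd0 : (d : ℝ) ≠ 0 := Nat.cast_ne_zero.mpr (by omega)
  rw [T2v2_eq_vecMulVec_of_eq_mul hherm hApsd.1 hρ, show 4 * ((d : ℝ) ^ 2 - 1) / (d : ℝ) ^ 2 =
    4 * (1 - 1 / (Fintype.card (Fin d) : ℝ) ^ 2) by rw [Fintype.card_fin]; field_simp]
  refine kyFan_vecMulVec_le k ?_ ?_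
  · exact sum_sq_corrPair_le (by rw [Fintype.card_coe, Finset.card_pair hfg])
      (P := fun j : {j // j ∈ ({f, g} : Finset (Fin 4))} => j.1 = f)
      (i₀ := ⟨f, by simp⟩) (i₁ := ⟨g, by simp⟩) rfl hfg.symm hherm htr horth hApsd hAtr
  · exact sum_sq_corrPair_le
      (by rw [Fintype.card_subtype_compl, Fintype.card_coe, Finset.card_pair hfg, Fintype.card_fin])
      (P := fun j : {j // j ∉ ({f, g} : Finset (Fin 4))} => j.1 = h)
      (i₀ := ⟨h, by simp [hfh.symm, hgh.symm]⟩) (i₁ := ⟨l, by simp [hfl.symm, hgl.symm]⟩) rfl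
      hhl.symm hherm htr horth hBpsd hBtr

/-- (Lemma 4(i)) If a pure four-partite state is separable under the bipartition `fg|hl`,
then `‖T_{fg|hl}‖_k ≤ 4(d²-1)/d²` for every `k = 1, …, d²-1`. -/
theorem kyFan_T2v2_of_sep (d : ℕ) (hd : 2 ≤ d)
    (lam : Fin (d ^ 2 - 1) → Matrix (Fin d) (Fin d) ℂ)
    (hherm : ∀ i, (lam i).IsHermitian)
    (htr : ∀ i, (lam i).trace = 0)
    (horth : ∀ i j, (lam i * lam j).trace = if i = j then 2 else 0)
    (f g h l : Fin 4) (hperm : ({f, g, h, l} : Finset (Fin 4)) = Finset.univ)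
    (ρ : Matrix (Fin 4 → Fin d) (Fin 4 → Fin d) ℂ)
    (hpsd : ρ.PosSemidef) (htrρ : ρ.trace = 1) (hpure : ρ * ρ = ρ)
    (hsep : SepUnder ρ {f, g})
    (k : ℕ) (hk1 : 1 ≤ k) (hk2 : k ≤ d ^ 2 - 1) :
    kyFan k (T2v2 lam ρ f g h l) ≤ 4 * ((d : ℝ) ^ 2 - 1) / (d : ℝ) ^ 2 :=
  kyFan_T2v2_of_sep_general d hd lam hherm htr horth f g h l hperm ρ hsep k
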